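/- arXiv:1402.1429 — 3 statements merged into one kernel-verified Lean document; each statement's English description precedes it below -/
import Mathlib

section
/- A completely positive map Ψ(X) = Σ_{i=1}^m V_i X V_i* on n×n Hermitian matrices is strictly positive (maps every nonzero positive semidefinite matrix to a positive definite matrix) if and only if there do not exist nonzero vectors x, y ∈ ℂ^n such that x* V_i y = 0 for all i = 1,...,m. -/
/-!
For `X ⪰ 0` the quadratic form `x* Ψ(X) x = Σ (V_i* x)* X (V_i* x)` is a sum of nonnegative terms,
and the `i`-th term vanishes iff `X V_i* x = 0`, i.e. iff `x ⟂ V_i (range X)`. Hence `Ψ(X)` fails to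
be positive definite exactly when some `x ≠ 0` is orthogonal to `V_i y` for all `i` and some fixed
`y ∈ range X`. Every nonzero `X` has such a nonzero `y`, and the rank-one `X = y y*` has `y` itself.
-/

open Matrix ComplexOrder

namespace Matrix

variable {𝕜 n ι : Type*} [RCLike 𝕜] [Fintype n] [Fintype ι]

def krausMap (V : ι → Matrix n n 𝕜) (X : Matrix n n 𝕜) : Matrix n n 𝕜 :=
  ∑ i, V i * X * (V i)ᴴ

lemma conjTranspose_mulVec_eq_zero_iff {m : Type*} [Fintype m] (A : Matrix n m 𝕜)
    (x : n → 𝕜) : Aᴴ *ᵥ x = 0 ↔ ∀ z, star x ⬝ᵥ A *ᵥ z = 0 := by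
  have hx : star x ᵥ* A = star (Aᴴ *ᵥ x) := by rw [star_mulVec, conjTranspose_conjTranspose]
  simp_rw [dotProduct_mulVec, hx, dotProduct_eq_zero_iff, star_eq_zero]

lemma dotProduct_krausMap_mulVec (V : ι → Matrix n n 𝕜) (X : Matrix n n 𝕜) (x : n → 𝕜) :
    star x ⬝ᵥ krausMap V X *ᵥ x = ∑ i, star ((V i)ᴴ *ᵥ x) ⬝ᵥ X *ᵥ ((V i)ᴴ *ᵥ x) := by
  simp_rw [krausMap, sum_mulVec, dotProduct_sum, ← mulVec_mulVec, dotProduct_mulVec (star x),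
    star_mulVec, conjTranspose_conjTranspose]

variable {X : Matrix n n 𝕜}

lemma PosSemidef.posSemidef_krausMap (hX : X.PosSemidef) (V : ι → Matrix n n 𝕜) :
    (krausMap V X).PosSemidef :=
  posSemidef_sum _ fun i _ => hX.mul_mul_conjTranspose_same (V i)

lemma PosSemidef.dotProduct_krausMap_mulVec_eq_zero_iff (hX : X.PosSemidef)
    (V : ι → Matrix n n 𝕜) (x : n → 𝕜) :
    star x ⬝ᵥ krausMap V X *ᵥ x = 0 ↔ ∀ i z, star x ⬝ᵥ V i *ᵥ X *ᵥ z = 0 := by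
  rw [dotProduct_krausMap_mulVec,
    Finset.sum_eq_zero_iff_of_nonneg fun i _ => hX.dotProduct_mulVec_nonneg _]
  simp only [Finset.mem_univ, forall_const]
  refine forall_congr' fun i => ?_
  have hXV : X * (V i)ᴴ = (V i * X)ᴴ := by rw [conjTranspose_mul, hX.isHermitian.eq]
  rw [hX.dotProduct_mulVec_zero_iff, mulVec_mulVec, hXV, conjTranspose_mulVec_eq_zero_iff]
  simp_rw [mulVec_mulVec]

lemma PosSemidef.krausMap_posDef_iff (hX : X.PosSemidef) (V : ι → Matrix n n 𝕜) :
    (krausMap V X).PosDef ↔ ∀ x ≠ 0, ∃ i z, star x ⬝ᵥ V i *ᵥ X *ᵥ z ≠ 0 := by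
  have hΨ := hX.posSemidef_krausMap V
  simp_rw [posDef_iff_dotProduct_mulVec, hΨ.isHermitian, true_and]
  refine forall₂_congr fun x _ => ?_
  rw [(hΨ.dotProduct_mulVec_nonneg x).lt_iff_ne', ne_eq,
    hX.dotProduct_krausMap_mulVec_eq_zero_iff]
  push Not
  rfl

end Matrix

theorem stmt2 (n m : ℕ) (V : Fin m → Matrix (Fin n) (Fin n) ℂ) :
    (∀ X : Matrix (Fin n) (Fin n) ℂ, X.PosSemidef → X ≠ 0 →
        (∑ i, V i * X * (V i)ᴴ).PosDef) ↔
      ¬ ∃ x y : Fin n → ℂ, x ≠ 0 ∧ y ≠ 0 ∧ ∀ i, star x ⬝ᵥ (V i *ᵥ y) = 0 := by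
  constructor
  · rintro hΨ ⟨x, y, hx, hy, hxy⟩
    have hyy := posSemidef_vecMulVec_self_star y
    have hyy0 : vecMulVec y (star y) ≠ 0 := by simp [hy]
    obtain ⟨i, z, hi⟩ := (hyy.krausMap_posDef_iff V).1 (hΨ _ hyy hyy0) x hx
    rw [vecMulVec_mulVec, mulVec_smul, dotProduct_smul, hxy i, smul_zero] at hi
    exact hi rfl
  · intro h X hX hX0
    refine (hX.krausMap_posDef_iff V).2 fun x hx => ?_
    obtain ⟨z, hz⟩ : ∃ z, X *ᵥ z ≠ 0 := by
      simpa [ext_iff_mulVec] using hX0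
    by_contra! hxX
    exact h ⟨x, X *ᵥ z, hx, hz, fun i => hxX i z⟩
end

section
/- Strict positivity of the completely positive map Ψ(X) = Σ_i V_i X V_i* is equivalent to the nonexistence of a rank-one matrix in the orthogonal complement (with respect to the trace inner product) of the linear span of {V_1,...,V_m} in ℂ^{n×n}. -/
/-!
For `X ⪰ 0` one has `x* Ψ(X) x = ∑ᵢ (Vᵢ* x)* X (Vᵢ* x)`, a sum of nonnegative terms, so it
vanishes iff `X Vᵢ* x = 0` for every `i`; and a rank-one `R = x y*` is orthogonal to all `Vᵢ`
iff `y* Vᵢ* x = 0` for every `i`. Given such `x, y`, the matrix `X = y y*` makes `Ψ(X)` singular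
at `x`. Conversely, if `Ψ(X)` is singular at `x ≠ 0`, then any nonzero column `y = X v` of `X`
satisfies `y* Vᵢ* x = v* X Vᵢ* x = 0`.
-/

open Matrix ComplexOrder

namespace Matrix

section Rank

variable {K m n : Type*} [Field K] [Fintype n]

theorem rank_eq_zero_iff {A : Matrix m n K} : A.rank = 0 ↔ A = 0 := by
  classical
  rw [rank, Submodule.finrank_eq_zero, LinearMap.range_eq_bot, ← toLin'_apply',
    LinearEquiv.map_eq_zero_iff]

theorem rank_eq_one_iff_exists_vecMulVec {A : Matrix n n K} :
    A.rank = 1 ↔ ∃ u v, u ≠ 0 ∧ v ≠ 0 ∧ A = vecMulVec u v := by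
  classical
  constructor
  · intro hA
    obtain ⟨u, -, hspan⟩ := finrank_eq_one_iff'.mp hA
    choose v hv using fun j ↦ hspan ⟨A *ᵥ Pi.single j 1, Pi.single j 1, rfl⟩
    have hA_eq : A = vecMulVec (u : n → K) v := by
      refine ext_of_mulVec_single fun j ↦ ?_
      have hcol : v j • (u : n → K) = A *ᵥ Pi.single j 1 := congrArg Subtype.val (hv j)
      rw [vecMulVec_mulVec, ← hcol]
      simp
    have hA0 : vecMulVec (u : n → K) v ≠ 0 := hA_eq ▸ fun h ↦ by simp [h] at hA
    rw [Ne, vecMulVec_eq_zero, not_or] at hA0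
    exact ⟨u, v, hA0.1, hA0.2, hA_eq⟩
  · rintro ⟨u, v, hu, hv, rfl⟩
    refine le_antisymm (rank_vecMulVec_le u v) (Nat.one_le_iff_ne_zero.mpr ?_)
    rw [Ne, rank_eq_zero_iff]
    exact vecMulVec_ne_zero hu hv

end Rank

theorem exists_mulVec_ne_zero {R m n : Type*} [NonAssocSemiring R] [Fintype n] {A : Matrix m n R}
    (hA : A ≠ 0) : ∃ v, A *ᵥ v ≠ 0 := by
  classical
  by_contra! h
  exact hA (ext_of_mulVec_single fun j ↦ by rw [h, zero_mulVec])

theorem PosSemidef.posDef_iff_dotProduct_mulVec_ne_zero {R n : Type*} [Ring R] [PartialOrder R]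
    [StarRing R] [Fintype n] {M : Matrix n n R} (hM : M.PosSemidef) :
    M.PosDef ↔ ∀ x ≠ 0, star x ⬝ᵥ M *ᵥ x ≠ 0 :=
  ⟨fun h _ hx ↦ (h.dotProduct_mulVec_pos hx).ne',
    fun h ↦ .of_dotProduct_mulVec_pos hM.isHermitian fun x hx ↦
      (hM.dotProduct_mulVec_nonneg x).lt_of_ne' (h x hx)⟩

section Kraus

variable {R m n ι : Type*} [Fintype n] [Fintype m] [Fintype ι]

theorem dotProduct_sum_mul_mul_conjTranspose_mulVec [CommSemiring R] [StarRing R]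
    (V : ι → Matrix m n R) (X : Matrix n n R) (x : m → R) :
    star x ⬝ᵥ (∑ i, V i * X * (V i)ᴴ) *ᵥ x =
      ∑ i, star ((V i)ᴴ *ᵥ x) ⬝ᵥ X *ᵥ ((V i)ᴴ *ᵥ x) := by
  rw [sum_mulVec, dotProduct_sum]
  refine Finset.sum_congr rfl fun i _ ↦ ?_
  rw [star_mulVec, conjTranspose_conjTranspose, ← mulVec_mulVec, ← mulVec_mulVec,
    dotProduct_mulVec]

theorem PosSemidef.sum_mul_mul_conjTranspose [CommRing R] [PartialOrder R] [StarRing R]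
    [AddLeftMono R] {X : Matrix n n R} (hX : X.PosSemidef) (V : ι → Matrix m n R) :
    (∑ i, V i * X * (V i)ᴴ).PosSemidef :=
  posSemidef_sum _ fun i _ ↦ hX.mul_mul_conjTranspose_same (V i)

theorem PosSemidef.dotProduct_sum_mul_mul_conjTranspose_mulVec_eq_zero_iff {𝕜 : Type*} [RCLike 𝕜]
    {X : Matrix n n 𝕜} (hX : X.PosSemidef) (V : ι → Matrix m n 𝕜) (x : m → 𝕜) :
    star x ⬝ᵥ (∑ i, V i * X * (V i)ᴴ) *ᵥ x = 0 ↔ ∀ i, X *ᵥ ((V i)ᴴ *ᵥ x) = 0 := by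
  rw [dotProduct_sum_mul_mul_conjTranspose_mulVec,
    Finset.sum_eq_zero_iff_of_nonneg fun i _ ↦ hX.dotProduct_mulVec_nonneg _]
  simp only [Finset.mem_univ, true_implies, hX.dotProduct_mulVec_zero_iff]

end Kraus

theorem exists_rank_eq_one_trace_conjTranspose_mul_eq_zero_iff {K n ι : Type*} [Field K]
    [StarRing K] [Fintype n] (V : ι → Matrix n n K) :
    (∃ R : Matrix n n K, R.rank = 1 ∧ ∀ i, ((V i)ᴴ * R).trace = 0) ↔
      ∃ x y : n → K, x ≠ 0 ∧ y ≠ 0 ∧ ∀ i, star y ⬝ᵥ (V i)ᴴ *ᵥ x = 0 := by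
  simp_rw [rank_eq_one_iff_exists_vecMulVec]
  constructor
  · rintro ⟨_, ⟨x, s, hx, hs, rfl⟩, h⟩
    refine ⟨x, star s, hx, star_ne_zero.mpr hs, fun i ↦ ?_⟩
    rw [star_star, dotProduct_comm, ← trace_vecMulVec, ← mul_vecMulVec]
    exact h i
  · rintro ⟨x, y, hx, hy, h⟩
    refine ⟨_, ⟨x, star y, hx, star_ne_zero.mpr hy, rfl⟩, fun i ↦ ?_⟩
    rw [mul_vecMulVec, trace_vecMulVec, dotProduct_comm]
    exact h i

end Matrix

theorem stmt7 (n m : ℕ) (V : Fin m → Matrix (Fin n) (Fin n) ℂ) :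
    (∀ X : Matrix (Fin n) (Fin n) ℂ, X.PosSemidef → X ≠ 0 →
        (∑ i, V i * X * (V i)ᴴ).PosDef) ↔
      ¬ ∃ R : Matrix (Fin n) (Fin n) ℂ, R.rank = 1 ∧ ∀ i, ((V i)ᴴ * R).trace = 0 := by
  rw [exists_rank_eq_one_trace_conjTranspose_mul_eq_zero_iff]
  constructor
  · rintro hΨ ⟨x, y, hx, hy, hxy⟩
    have hX := posSemidef_vecMulVec_self_star y
    have hΨX := hΨ _ hX (vecMulVec_ne_zero hy (star_ne_zero.mpr hy))
    refine (hΨX.dotProduct_mulVec_pos hx).ne' <|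
      (hX.dotProduct_sum_mul_mul_conjTranspose_mulVec_eq_zero_iff V x).mpr fun i ↦ ?_
    rw [vecMulVec_mulVec, hxy i, MulOpposite.op_zero, zero_smul]
  · intro hno X hX hX0
    refine (hX.sum_mul_mul_conjTranspose V).posDef_iff_dotProduct_mulVec_ne_zero.mpr
      fun x hx hzero ↦ hno ?_
    have hXV := (hX.dotProduct_sum_mul_mul_conjTranspose_mulVec_eq_zero_iff V x).mp hzero
    obtain ⟨v, hv⟩ := exists_mulVec_ne_zero hX0
    refine ⟨x, X *ᵥ v, hx, hv, fun i ↦ ?_⟩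
    rw [star_mulVec, hX.isHermitian.eq, ← dotProduct_mulVec, hXV i, dotProduct_zero]
end

section
/- The homogeneous system (a-e10) has a nonzero solution pair (x, y) ∈ ℂ^{N+2M+1} × ℂ^{N+2M+1} only if x_0 y_0 ≠ 0. Precisely: suppose nonzero x, y satisfy (i) x_i y_j = x_j y_i for all 0 ≤ i < j ≤ N+2M, (ii) x_i y_i = x_0 y_0 for i = 1,...,N+M, and (iii) (x_0 + r_i x_{k_i^3} − x_{N+M+i}) y_j = 0 for all i = 1,...,M and all j. Then x_0 ≠ 0 and y_0 ≠ 0. -/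
/-!
Condition (i) says the rank-one matrix `x yᵀ` is symmetric. If `x₀ = 0`, then (ii) kills the
diagonal entries `xᵢ yᵢ` for `i ≤ N + M`, and (iii) (with some `y_j ≠ 0`) gives
`x_{N+M+i} = r_i x_{k_i}`, whose diagonal entry is then `r_i² x_{k_i} y_{k_i} = 0` as well.
A symmetric rank-one matrix with zero diagonal vanishes, since `(xₚ y_q)² = (xₚ yₚ)(x_q y_q)`;
this contradicts `x, y ≠ 0`. Finally `y₀ = 0` would force `x₀ = 0` by proportionality.
-/

section Proportional

variable {ι R : Type*} [CommRing R] {x y : ι → R}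

lemma diag_eq_zero_of_eq_mul (hxy : ∀ i j, x i * y j = x j * y i) {i k : ι} {c : R}
    (hi : x i = c * x k) (hk : x k * y k = 0) : x i * y i = 0 := by
  linear_combination (y i + c * y k) * hi + c * hxy k i + c ^ 2 * hk

variable [NoZeroDivisors R]

lemma eq_zero_or_eq_zero_of_mul_comm_of_diag_eq_zero (hxy : ∀ i j, x i * y j = x j * y i)
    (hdiag : ∀ i, x i * y i = 0) : x = 0 ∨ y = 0 := by
  by_contra! h
  obtain ⟨p, hp⟩ := Function.ne_iff.mp h.1
  obtain ⟨q, hq⟩ := Function.ne_iff.mp h.2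
  have hsq : (x p * y q) * (x p * y q) = (x p * y p) * (x q * y q) := by
    linear_combination (x p * y q) * hxy p q
  rw [hdiag p, zero_mul, mul_self_eq_zero] at hsq
  exact (mul_ne_zero hp hq) hsq

lemma eq_zero_of_mul_comm_of_eq_zero (hxy : ∀ i j, x i * y j = x j * y i) (hy : y ≠ 0)
    {i : ι} (hi : y i = 0) : x i = 0 := by
  obtain ⟨q, hq⟩ := Function.ne_iff.mp hy
  have h := hxy i q
  rw [hi, mul_zero, mul_eq_zero] at h
  exact h.resolve_right hq

end Proportional

lemma Fin.eq_zero_or_exists_succ_or_exists_tail {N M : ℕ} (i : Fin (N + 2 * M + 1)) :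
    i = 0 ∨ (∃ j : Fin (N + M), i = ⟨j.1 + 1, by omega⟩) ∨
      ∃ m : Fin M, i = ⟨N + M + m.1 + 1, by omega⟩ := by
  rcases Nat.eq_zero_or_pos i.1 with h | h
  · exact Or.inl (Fin.ext h)
  rcases Nat.lt_or_ge i.1 (N + M + 1) with h' | h'
  · exact Or.inr (Or.inl ⟨⟨i.1 - 1, by omega⟩, Fin.ext (by simp only; omega)⟩)
  · exact Or.inr (Or.inr ⟨⟨i.1 - (N + M + 1), by omega⟩, Fin.ext (by simp only; omega)⟩)

theorem stmt14 (N M : ℕ)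
    (k3 : Fin M → Fin N) (r : Fin M → ℂ)
    (x y : Fin (N + 2 * M + 1) → ℂ) (hx : x ≠ 0) (hy : y ≠ 0)
    (h1 : ∀ i j : Fin (N + 2 * M + 1), i < j → x i * y j = x j * y i)
    (h2 : ∀ i : Fin (N + M),
      x ⟨i.1 + 1, by have := i.isLt; omega⟩ * y ⟨i.1 + 1, by have := i.isLt; omega⟩ =
        x 0 * y 0)
    (h3 : ∀ i : Fin M, ∀ j : Fin (N + 2 * M + 1),
      (x 0 + r i * x ⟨(k3 i).1 + 1, by have := (k3 i).isLt; omega⟩ -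
          x ⟨N + M + i.1 + 1, by have := i.isLt; omega⟩) * y j = 0) :
    x 0 ≠ 0 ∧ y 0 ≠ 0 := by
  have hxy : ∀ i j, x i * y j = x j * y i := by
    intro i j
    rcases lt_trichotomy i j with h | rfl | h
    exacts [h1 i j h, rfl, (h1 j i h).symm]
  have hx0 : x 0 ≠ 0 := by
    intro hx0
    obtain ⟨q, hq⟩ := Function.ne_iff.mp hy
    have hdiag : ∀ i, x i * y i = 0 := by
      intro i
      obtain rfl | ⟨j, rfl⟩ | ⟨m, rfl⟩ := Fin.eq_zero_or_exists_succ_or_exists_tail i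
      · rw [hx0, zero_mul]
      · rw [h2 j, hx0, zero_mul]
      · have htail := (mul_eq_zero.mp (h3 m q)).resolve_right hq
        rw [hx0, zero_add, sub_eq_zero] at htail
        refine diag_eq_zero_of_eq_mul hxy htail.symm ?_
        rw [h2 ⟨k3 m, by omega⟩, hx0, zero_mul]
    exact (eq_zero_or_eq_zero_of_mul_comm_of_diag_eq_zero hxy hdiag).elim hx hy
  exact ⟨hx0, fun hy0 => hx0 (eq_zero_of_mul_comm_of_eq_zero hxy hy hy0)⟩
end
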